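/- Let τ₁ < 0, τ₂ > 0, λ > 0, and let D = 2τ₂² + γ²σ² > 0. Define ρ_P = τ₁/√(τ₁² + D) and ρ_Q = (τ₁ - 2λτ₂)/√((τ₁ - 2λτ₂)² + D). Then ρ_P < 0, ρ_Q < 0, and ρ_Q² > ρ_P², i.e., the leverage correlation is negative under both measures and strictly more pronounced under Q. -/
import Mathlib


/-- Leverage correlations: with `D = 2τ₂² + γ²σ² > 0`,
`ρ_P = τ₁/√(τ₁²+D)` and `ρ_Q = (τ₁-2λτ₂)/√((τ₁-2λτ₂)²+D)` are both negative
and `ρ_Q² > ρ_P²`: leverage is more pronounced under `Q`. -/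
theorem leverage_more_pronounced_under_Q (τ₁ τ₂ l γ σ D : ℝ)
    (hτ₁ : τ₁ < 0) (hτ₂ : 0 < τ₂) (hl : 0 < l)
    (hD : D = 2 * τ₂ ^ 2 + γ ^ 2 * σ ^ 2) (hDpos : 0 < D) :
    τ₁ / Real.sqrt (τ₁ ^ 2 + D) < 0 ∧
    (τ₁ - 2 * l * τ₂) / Real.sqrt ((τ₁ - 2 * l * τ₂) ^ 2 + D) < 0 ∧
    (τ₁ / Real.sqrt (τ₁ ^ 2 + D)) ^ 2 <
      ((τ₁ - 2 * l * τ₂) / Real.sqrt ((τ₁ - 2 * l * τ₂) ^ 2 + D)) ^ 2 := by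
  set b := τ₁ - 2 * l * τ₂ with hb
  have hbneg : b < 0 := by nlinarith
  have h1 : (0:ℝ) < τ₁ ^ 2 + D := by positivity
  have h2 : (0:ℝ) < b ^ 2 + D := by positivity
  have hs1 : 0 < Real.sqrt (τ₁ ^ 2 + D) := Real.sqrt_pos.mpr h1
  have hs2 : 0 < Real.sqrt (b ^ 2 + D) := Real.sqrt_pos.mpr h2
  refine ⟨div_neg_of_neg_of_pos hτ₁ hs1, div_neg_of_neg_of_pos hbneg hs2, ?_⟩
  rw [div_pow, div_pow, Real.sq_sqrt h1.le, Real.sq_sqrt h2.le,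
    div_lt_div_iff₀ h1 h2]
  have hsq : τ₁ ^ 2 < b ^ 2 := by
    have h3 : (0:ℝ) < τ₁ - b := by nlinarith
    have h4 : (0:ℝ) < -(τ₁ + b) := by linarith
    nlinarith [mul_pos h3 h4]
  nlinarith
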